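/- arXiv:1607.01258 — 11 statements merged into one kernel-verified Lean document; each statement's English description precedes it below -/
import Mathlib

section
/- For α ≥ 2, the congruence 2^α · φ(2^α) ≡ 2 (mod σ(2^α)) holds if and only if (2^(α+1) - 1) divides 15. -/
theorem pow_two_subbarao_iff_dvd_fifteen (α : ℕ) (hα : 2 ≤ α) :
    (2 ^ α * Nat.totient (2 ^ α) ≡ 2 [MOD ArithmeticFunction.sigma 1 (2 ^ α)]) ↔
      (2 ^ (α + 1) - 1) ∣ 15 := by
  have hσ : ArithmeticFunction.sigma 1 (2 ^ α) = 2 ^ (α + 1) - 1 := by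
    rw [ArithmeticFunction.sigma_one_apply_prime_pow Nat.prime_two,
      Nat.geomSum_eq le_rfl]
    simp
  have hφ : Nat.totient (2 ^ α) = 2 ^ (α - 1) := by
    rw [Nat.totient_prime_pow Nat.prime_two (by omega)]
    simp
  rw [hσ, hφ]
  rcases eq_or_lt_of_le hα with h2 | h2
  · subst h2; decide
  rcases eq_or_lt_of_le (show 3 ≤ α by omega) with h3 | h3
  · rw [← h3]; decide
  -- α ≥ 4 : both sides false
  obtain ⟨β, rfl⟩ := Nat.exists_eq_add_of_le (show 4 ≤ α by omega)
  set m : ℕ := 2 ^ (4 + β + 1) - 1 with hm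
  have hmge : 32 ≤ 2 ^ (4 + β + 1) := by
    calc (32 : ℕ) = 2 ^ 5 := by norm_num
    _ ≤ 2 ^ (4 + β + 1) := Nat.pow_le_pow_right (by norm_num) (by omega)
  constructor
  · intro h
    exfalso
    have h1 : (2 : ℕ) ^ (4 + β + 1) ≡ 1 [MOD m] := by
      have := (Nat.modEq_iff_dvd' (Nat.one_le_two_pow)).mpr (dvd_refl m)
      exact this.symm
    have h2' : (2 : ℕ) ^ (4 + β) * 2 ^ (4 + β - 1) = 2 ^ (4 + β + 1) * 2 ^ (β + 2) := by
      rw [show 4 + β - 1 = β + 3 from by omega, ← pow_add, ← pow_add]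
      congr 1
      omega
    rw [h2'] at h
    have h3' : (2 : ℕ) ^ (4 + β + 1) * 2 ^ (β + 2) ≡ 1 * 2 ^ (β + 2) [MOD m] :=
      h1.mul_right _
    have h4 : (2 : ℕ) ^ (β + 2) ≡ 2 [MOD m] := by
      simpa using h3'.symm.trans h
    have hlt : (2 : ℕ) ^ (β + 2) < m := by
      have : (2 : ℕ) ^ (β + 2) * 4 ≤ 2 ^ (4 + β + 1) := by
        rw [show (4 : ℕ) = 2 ^ 2 by norm_num, ← pow_add]
        exact Nat.pow_le_pow_right (by norm_num) (by omega)
      omega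
    have h2lt : (2 : ℕ) < m := by omega
    have := h4
    unfold Nat.ModEq at this
    rw [Nat.mod_eq_of_lt hlt, Nat.mod_eq_of_lt h2lt] at this
    have : (4 : ℕ) ≤ 2 ^ (β + 2) := by
      calc (4 : ℕ) = 2 ^ 2 := by norm_num
      _ ≤ 2 ^ (β + 2) := Nat.pow_le_pow_right (by norm_num) (by omega)
    omega
  · intro h
    exfalso
    have := Nat.le_of_dvd (by norm_num) h
    omega
end

section
/- There is no integer β ≥ 2 such that 5^β · φ(5^β) ≡ 2 (mod σ(5^β)). -/
/-!
Write `S = σ(p^k) = 1 + p + ⋯ + p^k`. Since `(p - 1) S + 1 = p^(k+1)`, the power `p^(k+1)` is `1`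
modulo `S`. For `k ≥ 2` we have `p^k φ(p^k) = p^(k+1) · (p - 1) p^(k-2)`, so the residue of
`p^k φ(p^k)` modulo `S` is `(p - 1) p^(k-2)`, already smaller than `S`. For `p = 5` this residue
`4 · 5^(k-2)` is divisible by `4`, so it is never `2`.
-/

open ArithmeticFunction
open scoped ArithmeticFunction.sigma

namespace Nat

theorem le_sigma_one {n : ℕ} (hn : n ≠ 0) : n ≤ σ 1 n := by
  rw [sigma_one_apply]
  exact Finset.single_le_sum (f := fun d => d) (fun _ _ => Nat.zero_le _) (mem_divisors_self n hn)

variable {p : ℕ}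

theorem sigma_one_prime_pow_mul_sub_one_add_one (hp : p.Prime) (k : ℕ) :
    σ 1 (p ^ k) * (p - 1) + 1 = p ^ (k + 1) := by
  have h := geom_sum_mul_add (p - 1) (k + 1)
  rwa [Nat.sub_add_cancel hp.one_le, ← sigma_one_apply_prime_pow hp] at h

theorem prime_pow_succ_modEq_one_sigma_one (hp : p.Prime) (k : ℕ) :
    p ^ (k + 1) ≡ 1 [MOD σ 1 (p ^ k)] := by
  rw [← sigma_one_prime_pow_mul_sub_one_add_one hp k]
  exact Nat.mul_add_mod _ _ _

theorem prime_pow_mul_totient_mod_sigma_one (hp : p.Prime) {k : ℕ} (hk : 2 ≤ k) :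
    p ^ k * φ (p ^ k) % σ 1 (p ^ k) = (p - 1) * p ^ (k - 2) := by
  obtain ⟨j, rfl⟩ := Nat.exists_eq_add_of_le hk
  have hsplit : p ^ (2 + j) * φ (p ^ (2 + j)) = p ^ (2 + j + 1) * ((p - 1) * p ^ j) := by
    rw [show 2 + j = (j + 1) + 1 by omega, totient_prime_pow_succ hp]
    ring
  have hlt : (p - 1) * p ^ j < σ 1 (p ^ (2 + j)) := calc
    (p - 1) * p ^ j < p * p * p ^ j :=
      Nat.mul_lt_mul_of_pos_right ((Nat.sub_lt hp.pos one_pos).trans_le (Nat.le_mul_self p))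
        (pow_pos hp.pos j)
    _ = p ^ (2 + j) := by ring
    _ ≤ σ 1 (p ^ (2 + j)) := le_sigma_one (pow_ne_zero _ hp.ne_zero)
  rw [hsplit, Nat.add_sub_cancel_left,
    (prime_pow_succ_modEq_one_sigma_one hp (2 + j)).mul_right ((p - 1) * p ^ j), one_mul,
    Nat.mod_eq_of_lt hlt]

end Nat

theorem no_pow_five_subbarao :
    ¬ ∃ β : ℕ, 2 ≤ β ∧
      5 ^ β * Nat.totient (5 ^ β) ≡ 2 [MOD ArithmeticFunction.sigma 1 (5 ^ β)] := by
  rintro ⟨β, hβ, h⟩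
  have h5 : Nat.Prime 5 := by norm_num
  have hS : 2 < σ 1 (5 ^ β) := calc
    2 < 5 ^ β := Nat.lt_of_lt_of_le (by norm_num) (Nat.pow_le_pow_right (by norm_num) hβ)
    _ ≤ σ 1 (5 ^ β) := Nat.le_sigma_one (by positivity)
  have hres : 4 * 5 ^ (β - 2) = 2 := by
    rw [← Nat.prime_pow_mul_totient_mod_sigma_one h5 hβ, h, Nat.mod_eq_of_lt hS]
  omega
end

section
/- If β ≥ 2 and D = (5^(β+1) - 1)/4 divides 5^(2β-1)·4 - 2, then D divides 246. -/
theorem sigma_pow_five_dvd_246 (β : ℕ) (hβ : 2 ≤ β)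
    (h : (5 ^ (β + 1) - 1) / 4 ∣ 5 ^ (2 * β - 1) * 4 - 2) :
    (5 ^ (β + 1) - 1) / 4 ∣ 246 := by
  have h1 : 5 ^ (β + 1) % 4 = 1 := by simp [Nat.pow_mod]
  have hple : (2 : ℕ) ≤ 5 ^ (2 * β - 1) * 4 := by
    have : 1 ≤ 5 ^ (2 * β - 1) := Nat.one_le_pow _ _ (by norm_num)
    omega
  set d := (5 ^ (β + 1) - 1) / 4 with hd
  have h4 : 4 * d = 5 ^ (β + 1) - 1 := Nat.mul_div_cancel' (by omega : 4 ∣ 5 ^ (β + 1) - 1)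
  have h5 : 5 ^ (β + 1) = 4 * d + 1 := by
    have : 1 ≤ 5 ^ (β + 1) := Nat.one_le_pow _ _ (by norm_num)
    omega
  have h5z : (5 : ℤ) ^ (β + 1) = 4 * (d : ℤ) + 1 := by
    have := congrArg (Nat.cast : ℕ → ℤ) h5
    push_cast at this
    exact this
  have hz : (d : ℤ) ∣ (5 : ℤ) ^ (2 * β - 1) * 4 - 2 := by
    have hc := Int.natCast_dvd_natCast.mpr h
    rw [Nat.cast_sub hple] at hc
    push_cast at hc
    exact hc
  have hz2 : (d : ℤ) ∣ 125 * ((5 : ℤ) ^ (2 * β - 1) * 4 - 2) := hz.mul_left 125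
  have hpow : (5 : ℤ) ^ (2 * β - 1) * 125 = ((5 : ℤ) ^ (β + 1)) ^ 2 := by
    rw [show (125 : ℤ) = 5 ^ 3 by norm_num, ← pow_add, ← pow_mul,
      show 2 * β - 1 + 3 = (β + 1) * 2 by omega]
  have hkey : 125 * ((5 : ℤ) ^ (2 * β - 1) * 4 - 2)
      = (d : ℤ) * (64 * d + 32) - 246 := by
    have : 125 * ((5 : ℤ) ^ (2 * β - 1) * 4 - 2)
        = 4 * ((5 : ℤ) ^ (2 * β - 1) * 125) - 250 := by ring
    rw [this, hpow, h5z]; ring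
  rw [hkey] at hz2
  have hfin : (d : ℤ) ∣ 246 := by
    have := dvd_sub (dvd_mul_right (d : ℤ) (64 * d + 32)) hz2
    simpa using this
  exact_mod_cast hfin
end

section
/- Let α, β ≥ 1, M = 2^(α+1) - 1 and N = (5^(β+1) - 1)/4. If M·N divides 2^(2α+1)·5^(2β-1) - 2, then both M and N divide 2^(2(α+1)) + 5^(2(β+1)) - 501. -/
theorem M_and_N_dvd (α β : ℕ) (hα : 1 ≤ α) (hβ : 1 ≤ β)
    (h : (2 ^ (α + 1) - 1) * ((5 ^ (β + 1) - 1) / 4) ∣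
      2 ^ (2 * α + 1) * 5 ^ (2 * β - 1) - 2) :
    (2 ^ (α + 1) - 1) ∣ 2 ^ (2 * (α + 1)) + 5 ^ (2 * (β + 1)) - 501 ∧
      ((5 ^ (β + 1) - 1) / 4) ∣ 2 ^ (2 * (α + 1)) + 5 ^ (2 * (β + 1)) - 501 := by
  obtain ⟨a, rfl⟩ : ∃ a, α = a + 1 := ⟨α - 1, by omega⟩
  obtain ⟨b, rfl⟩ : ∃ b, β = b + 1 := ⟨β - 1, by omega⟩
  have e2 : 2 * (b + 1) - 1 = 2 * b + 1 := by omega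
  rw [e2] at h
  have hm4 : (5 : ℕ) ^ (b + 1 + 1) % 4 = 1 := by
    rw [Nat.pow_mod]; norm_num
  have h5 : 1 ≤ (5 : ℕ) ^ (b + 1 + 1) := Nat.one_le_pow _ _ (by norm_num)
  have hn : 4 * ((5 ^ (b + 1 + 1) - 1) / 4) = 5 ^ (b + 1 + 1) - 1 := by
    generalize (5 : ℕ) ^ (b + 1 + 1) = Q at hm4 h5 ⊢
    omega
  set n : ℕ := (5 ^ (b + 1 + 1) - 1) / 4 with hndef
  clear_value n
  have h21 : 1 ≤ (2 : ℕ) ^ (a + 1 + 1) := Nat.one_le_pow _ _ (by norm_num)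
  have hp1 : 2 ≤ (2 : ℕ) ^ (2 * (a + 1) + 1) := by
    have := Nat.pow_le_pow_right (show 1 ≤ 2 by norm_num)
      (show 1 ≤ 2 * (a + 1) + 1 by omega)
    simpa using this
  have h2le : 2 ≤ (2 : ℕ) ^ (2 * (a + 1) + 1) * 5 ^ (2 * b + 1) :=
    le_trans hp1 (Nat.le_mul_of_pos_right _ (by positivity))
  have h501 : 501 ≤ (2 : ℕ) ^ (2 * (a + 1 + 1)) + 5 ^ (2 * (b + 1 + 1)) := by
    have h625 : 625 ≤ (5 : ℕ) ^ (2 * (b + 1 + 1)) := by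
      have := Nat.pow_le_pow_right (show 1 ≤ 5 by norm_num)
        (show 4 ≤ 2 * (b + 1 + 1) by omega)
      simpa using this
    exact le_trans (le_trans (by norm_num) h625) (Nat.le_add_left _ _)
  zify [h2le, h21] at h
  zify [h5] at hn
  zify [h501, h21, h5]
  push_cast at h hn ⊢
  have hM : ((2 : ℤ) ^ (a + 1 + 1) - 1) ∣
      2 ^ (2 * (a + 1) + 1) * 5 ^ (2 * b + 1) - 2 := (dvd_mul_right _ _).trans h
  have hN : ((n : ℤ)) ∣ 2 ^ (2 * (a + 1) + 1) * 5 ^ (2 * b + 1) - 2 :=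
    (dvd_mul_left _ _).trans h
  constructor
  · have d1 : ((2 : ℤ) ^ (a + 1 + 1) - 1) ∣ 2 ^ (2 * (a + 1 + 1)) - 1 :=
      ⟨2 ^ (a + 1 + 1) + 1, by ring⟩
    have hT : (2 : ℤ) ^ (2 * (a + 1 + 1)) + 5 ^ (2 * (b + 1 + 1)) - 501 =
        250 * (2 ^ (2 * (a + 1) + 1) * 5 ^ (2 * b + 1) - 2)
          - (125 * 5 ^ (2 * b + 1) - 1) * (2 ^ (2 * (a + 1 + 1)) - 1) := by ring
    rw [hT]
    exact dvd_sub (hM.mul_left _) (d1.mul_left _)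
  · have d2 : ((n : ℤ)) ∣ 5 ^ (2 * (b + 1 + 1)) - 1 :=
      ⟨4 * (5 ^ (b + 1 + 1) + 1), by linear_combination (-(5 ^ (b + 1 + 1) : ℤ) - 1) * hn⟩
    have hT : (2 : ℤ) ^ (2 * (a + 1 + 1)) + 5 ^ (2 * (b + 1 + 1)) - 501 =
        250 * (2 ^ (2 * (a + 1) + 1) * 5 ^ (2 * b + 1) - 2)
          + (1 - 2 ^ (2 * (a + 1 + 1))) * (5 ^ (2 * (b + 1 + 1)) - 1) := by ring
    rw [hT]
    exact dvd_add (hN.mul_left _) (d2.mul_left _)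
end

section
/- Let α, β ≥ 1 with n = 2^α·5^β satisfying n·φ(n) ≡ 2 (mod σ(n)). Then α is even. -/
theorem alpha_even (α β : ℕ) (hα : 1 ≤ α) (hβ : 1 ≤ β)
    (h : (2 ^ α * 5 ^ β) * Nat.totient (2 ^ α * 5 ^ β) ≡ 2
      [MOD ArithmeticFunction.sigma 1 (2 ^ α * 5 ^ β)]) :
    Even α := by
  by_contra hodd
  rw [Nat.not_even_iff_odd] at hodd
  have hc : Nat.Coprime (2^α) (5^β) := Nat.Coprime.pow _ _ (by norm_num)
  have h1 : Nat.totient (2 ^ α * 5 ^ β) = 2^(α-1) * (4 * 5^(β-1)) := by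
    rw [Nat.totient_mul hc, Nat.totient_prime_pow (by norm_num) hα,
      Nat.totient_prime_pow (by norm_num) hβ]
    ring
  have h3 : (3 : ℕ) ∣ ArithmeticFunction.sigma 1 (2 ^ α * 5 ^ β) := by
    rw [ArithmeticFunction.isMultiplicative_sigma.map_mul_of_coprime hc]
    apply Dvd.dvd.mul_right
    rw [← ZMod.natCast_eq_zero_iff _ 3,
      ArithmeticFunction.sigma_one_apply_prime_pow Nat.prime_two]
    push_cast
    have : ((2 : ℕ) : ZMod 3) = -1 := by decide
    rw [show ((2:ZMod 3)) = -1 by decide, neg_one_geom_sum, if_pos (Odd.add_one hodd)]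
  have h2 : (2 ^ α * 5 ^ β) * Nat.totient (2 ^ α * 5 ^ β) ≡ 2 [MOD 3] :=
    Nat.ModEq.of_dvd h3 h
  rw [h1] at h2
  have := (ZMod.natCast_eq_natCast_iff _ _ 3).2 h2
  obtain ⟨a, rfl⟩ : ∃ a, α = a + 1 := ⟨α - 1, (Nat.succ_pred_eq_of_pos hα).symm⟩
  obtain ⟨b, rfl⟩ : ∃ b, β = b + 1 := ⟨β - 1, (Nat.succ_pred_eq_of_pos hβ).symm⟩
  push_cast at this

  have e2 : ((2 : ℕ) : ZMod 3) = -1 := by decide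
  have e5 : ((5 : ℕ) : ZMod 3) = -1 := by decide
  rw [show ((2:ZMod 3)) = -1 by decide, show ((5:ZMod 3)) = -1 by decide] at this
  ring_nf at this
  simp only [pow_mul', neg_one_sq, one_pow, one_mul] at this
  exact absurd this (by decide)
end

section
/- Let α, β ≥ 1 with n = 2^α·5^β satisfying n·φ(n) ≡ 2 (mod σ(n)). Then β is even. -/
lemma three_dvd_sum_pow5 (k : ℕ) : 3 ∣ ∑ i ∈ Finset.range (2 * k + 2), 5 ^ i := by
  induction k with
  | zero => decide
  | succ n ih =>
    have : 2 * (n + 1) + 2 = (2 * n + 2) + 1 + 1 := by ring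
    rw [this, Finset.sum_range_succ, Finset.sum_range_succ]
    have h5 : (3:ℕ) ∣ 5 ^ (2 * n + 2) + 5 ^ (2 * n + 2 + 1) := by
      have : 5 ^ (2 * n + 2) + 5 ^ (2 * n + 2 + 1) = 5 ^ (2 * n + 2) * 6 := by ring
      rw [this]; exact Dvd.dvd.mul_left (by norm_num) _
    rw [add_assoc]
    exact dvd_add ih h5

theorem beta_even (α β : ℕ) (hα : 1 ≤ α) (hβ : 1 ≤ β)
    (h : (2 ^ α * 5 ^ β) * Nat.totient (2 ^ α * 5 ^ β) ≡ 2
      [MOD ArithmeticFunction.sigma 1 (2 ^ α * 5 ^ β)]) :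
    Even β := by
  by_contra hodd
  rw [Nat.not_even_iff_odd] at hodd
  obtain ⟨k, hk⟩ := hodd
  -- 3 divides sigma
  have hcop : Nat.Coprime (2 ^ α) (5 ^ β) := by
    apply Nat.Coprime.pow
    decide
  have hs : ArithmeticFunction.sigma 1 (2 ^ α * 5 ^ β)
      = ArithmeticFunction.sigma 1 (2 ^ α) * ArithmeticFunction.sigma 1 (5 ^ β) :=
    ArithmeticFunction.isMultiplicative_sigma.map_mul_of_coprime hcop
  have h5s : ArithmeticFunction.sigma 1 (5 ^ β) = ∑ i ∈ Finset.range (β + 1), 5 ^ i :=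
    ArithmeticFunction.sigma_one_apply_prime_pow (by norm_num)
  have h3 : 3 ∣ ArithmeticFunction.sigma 1 (2 ^ α * 5 ^ β) := by
    rw [hs, h5s, hk]
    have := three_dvd_sum_pow5 k
    have h2 : 2 * k + 1 + 1 = 2 * k + 2 := by ring
    rw [h2]
    exact Dvd.dvd.mul_left this _
  have h3' : (2 ^ α * 5 ^ β) * Nat.totient (2 ^ α * 5 ^ β) ≡ 2 [MOD 3] :=
    h.of_dvd h3
  -- compute totient
  have ht : Nat.totient (2 ^ α * 5 ^ β) = 2 ^ (α - 1) * (4 * 5 ^ (β - 1)) := by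
    rw [Nat.totient_mul hcop, Nat.totient_prime_pow (by norm_num) hα,
      Nat.totient_prime_pow (by norm_num) hβ]
    ring_nf
  rw [ht] at h3'
  have heq : (2 ^ α * 5 ^ β) * (2 ^ (α - 1) * (4 * 5 ^ (β - 1))) = 2 ^ (2 * α + 1) * 5 ^ (2 * β - 1) := by
    obtain ⟨a, ha⟩ := Nat.exists_eq_add_of_le hα
    obtain ⟨b, hb⟩ := Nat.exists_eq_add_of_le hβ
    subst ha hb
    simp only [Nat.add_sub_cancel_left]
    ring_nf
    have h2 : 2 + b * 2 - 1 = b * 2 + 1 := by omega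
    rw [h2]
    ring
  rw [heq] at h3'
  -- mod 3 computation
  have hm : 2 ^ (2 * α + 1) * 5 ^ (2 * β - 1) ≡ 2 ^ (2 * α + 1 + (2 * β - 1)) [MOD 3] := by
    have := Nat.ModEq.mul_left (2 ^ (2 * α + 1))
      (Nat.ModEq.pow (2 * β - 1) (show (5:ℕ) ≡ 2 [MOD 3] by decide))
    rwa [← pow_add] at this
  have hsum : 2 * α + 1 + (2 * β - 1) = 2 * (α + β) := by omega
  rw [hsum] at hm
  have h1 : (2:ℕ) ^ (2 * (α + β)) ≡ 1 [MOD 3] := by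
    rw [pow_mul]
    calc ((2:ℕ)^2) ^ (α+β) ≡ 1 ^ (α+β) [MOD 3] := Nat.ModEq.pow _ (show (2:ℕ)^2 ≡ 1 [MOD 3] by decide)
      _ = 1 := one_pow _
  have : (1:ℕ) ≡ 2 [MOD 3] := (hm.trans h1).symm.trans h3'
  exact absurd this (by decide)
end

section
/- Let α, β ≥ 1 with n = 2^α·5^β satisfying n·φ(n) ≡ 2 (mod σ(n)). Then gcd(2^(α+1) - 1, (5^(β+1) - 1)/4) = 1. -/
/-!
Here `σ(n) = M N` and `n φ(n) = 2^(2α+1) 5^(2β-1)`. Modulo a common divisor `d` of `M` and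
`N` we have `2^(α+1) ≡ 5^(β+1) ≡ 1`, hence
`500 ≡ 250 n φ(n) = (2^(α+1))² (5^(β+1))² ≡ 1`, i.e. `d ∣ 499`. Reducing the hypothesis
modulo `3` shows that `3 ∤ M`, so `α` is even; since `2` has order `166` modulo the prime
`499`, then `499 ∤ M`, and `d = 1`.
-/

open ArithmeticFunction
open scoped ArithmeticFunction.sigma Nat

lemma sigma_one_two_pow_mul_five_pow (α β : ℕ) :
    σ 1 (2 ^ α * 5 ^ β) = (2 ^ (α + 1) - 1) * ((5 ^ (β + 1) - 1) / 4) := by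
  rw [isMultiplicative_sigma.map_mul_of_coprime (Nat.Coprime.pow _ _ (by norm_num)),
    sigma_one_apply_prime_pow Nat.prime_two, sigma_one_apply_prime_pow (by norm_num),
    Nat.geomSum_eq le_rfl, Nat.geomSum_eq (by norm_num)]
  norm_num

lemma two_pow_mul_five_pow_mul_totient (a b : ℕ) :
    2 ^ (a + 1) * 5 ^ (b + 1) * φ (2 ^ (a + 1) * 5 ^ (b + 1)) =
      2 ^ (2 * a + 3) * 5 ^ (2 * b + 1) := by
  rw [Nat.totient_mul (Nat.Coprime.pow _ _ (by norm_num)),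
    Nat.totient_prime_pow_succ Nat.prime_two, Nat.totient_prime_pow_succ (by norm_num)]
  ring

lemma two_pow_mul_five_pow_modEq_one_mod_three (a b : ℕ) :
    2 ^ (2 * a + 3) * 5 ^ (2 * b + 1) ≡ 1 [MOD 3] := by
  rw [← ZMod.natCast_eq_natCast_iff]
  push_cast
  rw [show (2 : ZMod 3) = -1 by decide, show (5 : ZMod 3) = -1 by decide, ← pow_add]
  exact Even.neg_one_pow ⟨a + b + 2, by ring⟩

lemma three_dvd_two_pow_sub_one {k : ℕ} (hk : Even k) : 3 ∣ 2 ^ k - 1 := by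
  obtain ⟨j, rfl⟩ := hk
  simpa [← two_mul, pow_mul] using Nat.sub_dvd_pow_sub_pow 4 1 j

lemma four_dvd_five_pow_sub_one (k : ℕ) : 4 ∣ 5 ^ k - 1 := by
  simpa using Nat.sub_dvd_pow_sub_pow 5 1 k

lemma ZMod.pow_eq_one_of_dvd_pow_sub_one {d x k : ℕ} (hx : x ≠ 0) (h : d ∣ x ^ k - 1) :
    (x : ZMod d) ^ k = 1 := by
  rw [← ZMod.natCast_eq_zero_iff, Nat.cast_sub (Nat.one_le_pow _ _ (Nat.pos_of_ne_zero hx)),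
    sub_eq_zero] at h
  exact_mod_cast h

lemma four_hundred_ninety_nine_eq_zero {R : Type*} [CommRing R] {a b : ℕ}
    (h2 : (2 : R) ^ (a + 2) = 1) (h5 : (5 : R) ^ (b + 2) = 1)
    (h : (2 : R) ^ (2 * a + 3) * 5 ^ (2 * b + 1) = 2) : (499 : R) = 0 := by
  linear_combination
    (-250) * h + (2 ^ (a + 2) + 1) * (5 : R) ^ (2 * b + 4) * h2 + (5 ^ (b + 2) + 1) * h5

lemma orderOf_two_zmod_499 : orderOf (2 : ZMod 499) = 166 := by
  refine orderOf_eq_of_pow_and_pow_div_prime (by norm_num) (by decide +kernel) fun p hp hdvd => ?_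
  have hp' : p ∈ Nat.primeFactors 166 := Nat.mem_primeFactors.mpr ⟨hp, hdvd, by norm_num⟩
  rw [show Nat.primeFactors 166 = {2, 83} by decide +kernel] at hp'
  rcases Finset.mem_insert.mp hp' with rfl | hp'
  · decide +kernel
  · rw [Finset.mem_singleton.mp hp']
    decide +kernel

lemma not_499_dvd_two_pow_sub_one {k : ℕ} (hk : Odd k) : ¬ 499 ∣ 2 ^ k - 1 := fun h => by
  have h166 : 166 ∣ k := by
    rw [← orderOf_two_zmod_499, orderOf_dvd_iff_pow_eq_one]
    exact_mod_cast ZMod.pow_eq_one_of_dvd_pow_sub_one two_ne_zero h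
  obtain ⟨j, rfl⟩ := h166
  exact Nat.not_even_iff_odd.mpr hk ⟨83 * j, by ring⟩

theorem M_N_coprime (α β : ℕ) (hα : 1 ≤ α) (hβ : 1 ≤ β)
    (h : (2 ^ α * 5 ^ β) * Nat.totient (2 ^ α * 5 ^ β) ≡ 2
      [MOD ArithmeticFunction.sigma 1 (2 ^ α * 5 ^ β)]) :
    Nat.gcd (2 ^ (α + 1) - 1) ((5 ^ (β + 1) - 1) / 4) = 1 := by
  obtain ⟨a, rfl⟩ : ∃ a, α = a + 1 := ⟨α - 1, by omega⟩
  obtain ⟨b, rfl⟩ : ∃ b, β = b + 1 := ⟨β - 1, by omega⟩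
  rw [two_pow_mul_five_pow_mul_totient, sigma_one_two_pow_mul_five_pow] at h
  set M := 2 ^ (a + 1 + 1) - 1
  set N := (5 ^ (b + 1 + 1) - 1) / 4
  have ha : Even (a + 1) := by
    by_contra hodd
    have h3M : 3 ∣ M := three_dvd_two_pow_sub_one (Nat.not_even_iff_odd.mp hodd).add_one
    have h3 := h.of_dvd (h3M.mul_right N)
    exact absurd ((two_pow_mul_five_pow_modEq_one_mod_three a b).symm.trans h3) (by decide)
  have hM : Nat.gcd M N ∣ M := Nat.gcd_dvd_left M N
  have hN : Nat.gcd M N ∣ 5 ^ (b + 2) - 1 :=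
    (Nat.gcd_dvd_right M N).trans (Nat.div_dvd_of_dvd (four_dvd_five_pow_sub_one _))
  have h499 : Nat.gcd M N ∣ 499 := by
    rw [← ZMod.natCast_eq_zero_iff]
    refine four_hundred_ninety_nine_eq_zero
      (by exact_mod_cast ZMod.pow_eq_one_of_dvd_pow_sub_one two_ne_zero hM)
      (by exact_mod_cast ZMod.pow_eq_one_of_dvd_pow_sub_one (by norm_num) hN) ?_
    exact_mod_cast (ZMod.natCast_eq_natCast_iff _ _ _).mpr (h.of_dvd (Nat.gcd_dvd_mul M N))
  rcases (Nat.dvd_prime (by norm_num)).mp h499 with hd1 | hd499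
  · exact hd1
  · exact absurd (hd499 ▸ hM) (not_499_dvd_two_pow_sub_one ha.add_one)
end

section
/- Let α, β ≥ 1 be even integers with n = 2^α·5^β satisfying n·φ(n) ≡ 2 (mod σ(n)). Set x = 2^(α+1) and y = 5^(β+1). Then there exists a positive integer c such that x² + y² - 501 = c·(x-1)·(y-1). -/
theorem exists_c (α β : ℕ) (hα : 1 ≤ α) (hβ : 1 ≤ β) (hαe : Even α) (hβe : Even β)
    (h : (2 ^ α * 5 ^ β) * Nat.totient (2 ^ α * 5 ^ β) ≡ 2
      [MOD ArithmeticFunction.sigma 1 (2 ^ α * 5 ^ β)]) :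
    ∃ c : ℕ, 0 < c ∧
      (2 ^ (α + 1)) ^ 2 + (5 ^ (β + 1)) ^ 2 - 501 =
        c * (2 ^ (α + 1) - 1) * (5 ^ (β + 1) - 1) := by
  obtain ⟨a, rfl⟩ : ∃ a, α = a + 1 := ⟨α - 1, (Nat.succ_pred_eq_of_pos hα).symm⟩
  obtain ⟨b, rfl⟩ : ∃ b, β = b + 1 := ⟨β - 1, (Nat.succ_pred_eq_of_pos hβ).symm⟩
  set s : ℕ := ArithmeticFunction.sigma 1 (2 ^ (a+1) * 5 ^ (b+1)) with hs
  have hcop : Nat.Coprime (2 ^ (a+1)) (5 ^ (b+1)) := Nat.Coprime.pow _ _ (by norm_num)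
  have hsmul : s = (ArithmeticFunction.sigma 1 (2 ^ (a+1))) *
      (ArithmeticFunction.sigma 1 (5 ^ (b+1))) := by
    rw [hs, ArithmeticFunction.isMultiplicative_sigma.map_mul_of_coprime hcop]
  have hs2 : ArithmeticFunction.sigma 1 (2 ^ (a+1)) =
      ∑ k ∈ Finset.range (a+2), 2 ^ k :=
    ArithmeticFunction.sigma_one_apply_prime_pow Nat.prime_two
  have hs5 : ArithmeticFunction.sigma 1 (5 ^ (b+1)) =
      ∑ k ∈ Finset.range (b+2), 5 ^ k :=
    ArithmeticFunction.sigma_one_apply_prime_pow (by norm_num)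
  set X : ℤ := 2 ^ (a + 2) with hX
  set Y : ℤ := 5 ^ (b + 2) with hY
  -- 4 * s = (X - 1) * (Y - 1)
  have h4s : (4 : ℤ) * s = (X - 1) * (Y - 1) := by
    have g2 : (∑ k ∈ Finset.range (a+2), (2:ℤ) ^ k) * (2 - 1) = 2 ^ (a+2) - 1 :=
      geom_sum_mul (2:ℤ) (a+2)
    have g5 : (∑ k ∈ Finset.range (b+2), (5:ℤ) ^ k) * (5 - 1) = 5 ^ (b+2) - 1 :=
      geom_sum_mul (5:ℤ) (b+2)
    have hcast : (s : ℤ) = (∑ k ∈ Finset.range (a+2), (2:ℤ) ^ k) *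
        (∑ k ∈ Finset.range (b+2), (5:ℤ) ^ k) := by
      rw [hsmul, hs2, hs5]; push_cast; ring
    rw [hcast, hX, hY]
    nlinarith [g2, g5]
  -- s is odd
  have hsodd : Odd s := by
    rw [hsmul]
    refine Odd.mul ?_ ?_
    · rw [hs2, Nat.geomSum_eq le_rfl]
      simp only [show (2:ℕ) - 1 = 1 from rfl, Nat.div_one]
      have h2 : 2 ∣ 2 ^ (a+2) := dvd_pow_self 2 (by omega)
      have h3 : 2 ≤ 2 ^ (a+2) := Nat.one_lt_two_pow (by omega)
      rw [Nat.odd_iff]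
      omega
    · rw [hs5, Nat.odd_iff, Finset.sum_nat_mod]
      have : ∀ k ∈ Finset.range (b+2), 5 ^ k % 2 = 1 := by
        intro k _; rw [Nat.pow_mod]; norm_num
      rw [Finset.sum_congr rfl this]
      simp only [Finset.sum_const, Finset.card_range, smul_eq_mul, mul_one]
      obtain ⟨m, hm⟩ := hβe
      omega
  -- totient value
  have hphi : Nat.totient (2 ^ (a+1) * 5 ^ (b+1)) = 2 ^ a * (4 * 5 ^ b) := by
    rw [Nat.totient_mul hcop, Nat.totient_prime_pow Nat.prime_two (by omega),
      Nat.totient_prime_pow (by norm_num : Nat.Prime 5) (by omega)]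
    simp
    ring
  -- divisibility from the hypothesis
  have hdvd : (s:ℤ) ∣ ((2 ^ (a+1) * 5 ^ (b+1)) * Nat.totient (2 ^ (a+1) * 5 ^ (b+1)) : ℕ) - 2 := by
    exact_mod_cast Nat.ModEq.dvd h.symm
  have hval : (((2 ^ (a+1) * 5 ^ (b+1)) * Nat.totient (2 ^ (a+1) * 5 ^ (b+1)) : ℕ) : ℤ)
      = 2 ^ (2*a+3) * 5 ^ (2*b+1) := by
    rw [hphi]; push_cast; ring
  -- s divides X^2*Y^2 - 500
  have h500 : (s:ℤ) ∣ X^2 * Y^2 - 500 := by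
    have heq : X^2 * Y^2 - 500 = 250 * ((2:ℤ) ^ (2*a+3) * 5 ^ (2*b+1) - 2) := by
      rw [hX, hY]; ring
    rw [heq, ← hval]
    exact Dvd.dvd.mul_left hdvd 250
  -- s divides (X^2-1)*(Y^2-1)
  have hfac : (s:ℤ) ∣ (X^2 - 1) * (Y^2 - 1) := by
    refine ⟨4 * (X + 1) * (Y + 1), ?_⟩
    linear_combination (-(X + 1) * (Y + 1)) * h4s
  -- s divides V
  have hVs : (s:ℤ) ∣ X^2 + Y^2 - 501 := by
    have heq : X^2 + Y^2 - 501 = (X^2 * Y^2 - 500) - (X^2 - 1) * (Y^2 - 1) := by ring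
    rw [heq]; exact dvd_sub h500 hfac
  -- 4 divides V
  have hV4 : (4:ℤ) ∣ X^2 + Y^2 - 501 := by
    have h1 : (4:ℤ) ∣ Y^2 - 1 := by
      have hdd : (25 - 1 : ℤ) ∣ 25 ^ (b+2) - 1 ^ (b+2) := sub_dvd_pow_sub_pow 25 1 (b+2)
      have h2 : Y^2 = 25 ^ (b+2) := by
        rw [hY, show (25:ℤ) = 5^2 from by norm_num, ← pow_mul, ← pow_mul, mul_comm]
      rw [h2]
      simp only [one_pow] at hdd
      exact dvd_trans ⟨6, by norm_num⟩ hdd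
    have h2 : (4:ℤ) ∣ X^2 := by
      refine ⟨2 ^ (2*a+2), ?_⟩
      rw [hX]; ring
    obtain ⟨u, hu⟩ := h1; obtain ⟨w, hw⟩ := h2
    exact ⟨w + u - 125, by linarith⟩
  -- move to ℕ
  have hbig : 501 ≤ (2 ^ (a+2)) ^ 2 + (5 ^ (b+2)) ^ 2 := by
    have h5 : (5:ℕ) ^ 2 ≤ 5 ^ (b+2) := Nat.pow_le_pow_right (by norm_num) (by omega)
    nlinarith
  set v : ℕ := (2 ^ (a+2)) ^ 2 + (5 ^ (b+2)) ^ 2 - 501 with hv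
  have hvz : (v : ℤ) = X^2 + Y^2 - 501 := by
    rw [hv, hX, hY]
    push_cast [hbig]
    ring
  have hsv : s ∣ v := by
    have hh := hVs; rw [← hvz] at hh; exact_mod_cast hh
  have h4v : 4 ∣ v := by
    have hh := hV4; rw [← hvz] at hh; exact_mod_cast hh
  have hcop4 : Nat.Coprime 4 s := by
    have h2 : Nat.Coprime 2 s := Nat.coprime_two_left.mpr hsodd
    have hh : Nat.Coprime (2^2) s := Nat.Coprime.pow_left 2 h2
    simpa using hh
  obtain ⟨c, hc⟩ := Nat.Coprime.mul_dvd_of_dvd_of_dvd hcop4 h4v hsv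
  have hvpos : 0 < v := by
    have h5 : (5:ℕ) ^ 2 ≤ 5 ^ (b+2) := Nat.pow_le_pow_right (by norm_num) (by omega)
    have h6 : (625:ℕ) ≤ (5 ^ (b+2)) ^ 2 := by nlinarith
    omega
  refine ⟨c, ?_, ?_⟩
  · rcases Nat.eq_zero_or_pos c with h0 | h0
    · subst h0; simp at hc; omega
    · exact h0
  · have hx1 : (1:ℕ) ≤ 2 ^ (a+2) := Nat.one_le_two_pow
    have hy1 : (1:ℕ) ≤ 5 ^ (b+2) := Nat.one_le_pow _ _ (by norm_num)
    have hvc : (v:ℤ) = (c:ℤ) * (X - 1) * (Y - 1) := by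
      have hh : (v:ℤ) = 4 * s * c := by exact_mod_cast congrArg (Nat.cast (R := ℤ)) hc
      rw [hh]
      linear_combination (c:ℤ) * h4s
    have hgoal : v = c * (2 ^ (a+2) - 1) * (5 ^ (b+2) - 1) := by
      have hrhs : ((c * (2 ^ (a+2) - 1) * (5 ^ (b+2) - 1) : ℕ) : ℤ)
          = (c:ℤ) * (X - 1) * (Y - 1) := by
        push_cast [hx1, hy1, hX, hY]
        ring
      exact_mod_cast hvc.trans hrhs.symm
    convert hgoal using 3
end

section
/- Let α ≥ 1 and β ≥ 1 with M = 2^(α+1) - 1, and suppose 5·t² ≡ 1 (mod M) where t = 2^α·5^(β-1). Then M ≡ 1 or 4 (mod 5), and since M = 2^(α+1) - 1, necessarily α ≡ 0 (mod 4). -/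
theorem aux_mod5 (M : ℕ) (hsq' : IsSquare ((M % 5 : ℕ) : ZMod 5))
    (hne' : ((M % 5 : ℕ) : ZMod 5) ≠ 0) : M % 5 = 1 ∨ M % 5 = 4 := by
  have hlt : M % 5 < 5 := Nat.mod_lt _ (by norm_num)
  obtain ⟨r, hr5, hrM⟩ : ∃ r, r < 5 ∧ M % 5 = r := ⟨M % 5, hlt, rfl⟩
  rw [hrM] at hsq' hne' ⊢
  clear hrM hlt
  interval_cases r
  · exact absurd (by decide) hne'
  · left; rfl
  · exact absurd hsq' (by decide)
  · exact absurd hsq' (by decide)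
  · right; rfl

open scoped NumberTheorySymbols in
theorem M_mod_five_and_alpha (α β : ℕ) (hα : 1 ≤ α) (hβ : 1 ≤ β)
    (h : 5 * (2 ^ α * 5 ^ (β - 1)) ^ 2 ≡ 1 [MOD 2 ^ (α + 1) - 1]) :
    ((2 ^ (α + 1) - 1) % 5 = 1 ∨ (2 ^ (α + 1) - 1) % 5 = 4) ∧ α % 4 = 0 := by
  set M : ℕ := 2 ^ (α + 1) - 1 with hM
  set t : ℕ := 2 ^ α * 5 ^ (β - 1) with ht
  have h2 : (2:ℕ) ^ (α + 1) ≥ 4 := by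
    calc (2:ℕ)^2 ≤ 2 ^ (α+1) := Nat.pow_le_pow_right (by norm_num) (by omega)
    _ = 2^(α+1) := rfl
  have hM3 : 3 ≤ M := by omega
  -- coprimality
  have hcop : Nat.Coprime (5 * t ^ 2) M := by
    have := (Nat.coprime_of_mul_modEq_one 1 (by simpa using h))
    simpa using this
  have hcop5 : Nat.Coprime 5 M := Nat.Coprime.coprime_dvd_left ⟨t^2, rfl⟩ hcop
  have hcopt : Nat.Coprime t M := by
    have : Nat.Coprime (t^2) M := Nat.Coprime.coprime_dvd_left ⟨5, by ring⟩ hcop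
    exact (Nat.coprime_pow_left_iff (by norm_num) _ _).mp this
  have hModd : Odd M := by
    rcases Nat.even_or_odd M with he | ho
    · exfalso
      have : (2:ℕ) ∣ 2 ^ (α+1) := dvd_pow_self 2 (by omega)
      rcases he with ⟨k, hk⟩
      omega
    · exact ho
  -- Jacobi symbol J(5*t^2 | M) = 1
  have hj1 : J((5 * t ^ 2 : ℕ) | M) = 1 := by
    have h' : (5 * t ^ 2) % M = 1 % M := h
    have : ((5 * t ^ 2 : ℕ) : ℤ) % M = (1 : ℤ) % M := by
      have := congrArg (fun n : ℕ => (n : ℤ)) h'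
      push_cast at this
      exact_mod_cast this
    rw [jacobiSym.mod_left' this, jacobiSym.one_left]
  have hjt : J((t:ℤ) ^ 2 | M) = 1 := jacobiSym.sq_one' (by
    rw [Int.gcd_natCast_natCast]; exact hcopt)
  have hj5 : J((5:ℤ) | M) = 1 := by
    have : J((5 * t ^ 2 : ℕ) | M) = J((5:ℤ) | M) * J((t:ℤ)^2 | M) := by
      push_cast
      rw [jacobiSym.mul_left]
    rw [this, hjt, mul_one] at hj1
    exact hj1
  -- reciprocity
  have hrec : J((M:ℤ) | 5) = 1 := by
    rw [← jacobiSym.quadratic_reciprocity_one_mod_four (by norm_num) hModd]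
    exact hj5
  haveI : Fact (Nat.Prime 5) := ⟨by norm_num⟩
  have hsq : IsSquare ((M : ℤ) : ZMod 5) := ZMod.isSquare_of_jacobiSym_eq_one hrec
  have hne : ((M : ℤ) : ZMod 5) ≠ 0 := by
    intro h0
    have : (5:ℕ) ∣ M := by
      have : ((M:ℕ) : ZMod 5) = 0 := by exact_mod_cast h0
      exact (ZMod.natCast_eq_zero_iff M 5).mp this
    have := Nat.Coprime.eq_one_of_dvd hcop5 this
    norm_num at this
  -- M % 5 ∈ {1, 4}
  have hcast : ((M : ℤ) : ZMod 5) = ((M % 5 : ℕ) : ZMod 5) := by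
    rw [Int.cast_natCast, ZMod.natCast_mod]
  have hsq' : IsSquare ((M % 5 : ℕ) : ZMod 5) := hcast ▸ hsq
  have hne' : ((M % 5 : ℕ) : ZMod 5) ≠ 0 := hcast ▸ hne
  have hlt : M % 5 < 5 := Nat.mod_lt _ (by norm_num)
  have hM5 : M % 5 = 1 ∨ M % 5 = 4 := aux_mod5 M hsq' hne'
  -- periodicity: 2^(α+1) % 5 = 2^((α+1)%4) % 5
  have hper : 2 ^ (α + 1) % 5 = 2 ^ ((α + 1) % 4) % 5 := by
    conv_lhs => rw [← Nat.div_add_mod (α+1) 4]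
    rw [pow_add, pow_mul]
    rw [Nat.mul_mod, Nat.pow_mod]
    norm_num
  have hr : (α + 1) % 4 < 4 := Nat.mod_lt _ (by norm_num)
  have h2pos : 1 ≤ 2 ^ (α + 1) := Nat.one_le_two_pow
  interval_cases hrv : (α + 1) % 4 <;> simp at hper <;> omega
end

section
/- There are no positive integers X, Y with X ≡ 4 (mod 60) and Y ≡ 58 (mod 60) satisfying 19Y² - 15X² = -29924. -/
lemma no15 (m : ℕ) (N : ℤ) (h : ∀ a : ZMod m, 15 * a ^ 2 ≠ (N : ZMod m))
    (X : ℤ) (hX : 15 * X ^ 2 = N) : False := by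
  apply h (X : ZMod m)
  have h2 : ((15 * X ^ 2 : ℤ) : ZMod m) = ((N : ℤ) : ZMod m) := by rw [hX]
  push_cast at h2
  exact h2

lemma special242 (X : ℤ) (heq : 15 * X ^ 2 - 19 * 242 ^ 2 = 29924) (h3 : X % 3 ≠ 0) :
    False := by
  have h : X % 3 = 1 ∨ X % 3 = 2 := by omega
  rcases h with h | h
  · obtain ⟨k, hk⟩ : ∃ k, X = 3 * k + 1 := ⟨(X - 1) / 3, by omega⟩
    have h2 : X ^ 2 = 9 * k ^ 2 + 6 * k + 1 := by rw [hk]; ring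
    rw [h2] at heq
    have h45 : 135 * k ^ 2 + 90 * k + 15 = 1142640 := by linarith
    have := sq_nonneg k
    generalize k ^ 2 = t at h45 this
    omega
  · obtain ⟨k, hk⟩ : ∃ k, X = 3 * k + 2 := ⟨(X - 2) / 3, by omega⟩
    have h2 : X ^ 2 = 9 * k ^ 2 + 12 * k + 4 := by rw [hk]; ring
    rw [h2] at heq
    have h45 : 135 * k ^ 2 + 180 * k + 60 = 1142640 := by linarith
    have := sq_nonneg k
    generalize k ^ 2 = t at h45 this
    omega

lemma base (X Y : ℤ) (hX : 0 < X) (hY : 0 < Y) (hle : Y ≤ 1383)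
    (h3 : X % 3 ≠ 0) (h60 : Y % 60 = 2 ∨ Y % 60 = 58)
    (heq : 15 * X ^ 2 - 19 * Y ^ 2 = 29924) : False := by
  rcases h60 with h60 | h60
  · obtain ⟨k, hk⟩ : ∃ k, Y = 60 * k + 2 := ⟨(Y - 2) / 60, by omega⟩
    have hk2 : 0 ≤ k ∧ k ≤ 23 := by omega
    subst hk
    obtain ⟨hk0, hk23⟩ := hk2
    interval_cases k
    · -- Y = 2
      exact no15 7 30000 (by decide) X (by linarith)
    · -- Y = 62
      exact no15 23 102960 (by decide) X (by linarith)
    · -- Y = 122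
      exact no15 17 312720 (by decide) X (by linarith)
    · -- Y = 182
      exact no15 7 659280 (by decide) X (by linarith)
    · -- Y = 242
      exact special242 X heq h3
    · -- Y = 302
      exact no15 11 1762800 (by decide) X (by linarith)
    · -- Y = 362
      exact no15 7 2519760 (by decide) X (by linarith)
    · -- Y = 422
      exact no15 7 3413520 (by decide) X (by linarith)
    · -- Y = 482
      exact no15 13 4444080 (by decide) X (by linarith)
    · -- Y = 542
      exact no15 9 5611440 (by decide) X (by linarith)
    · -- Y = 602
      exact no15 7 6915600 (by decide) X (by linarith)
    · -- Y = 662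
      exact no15 13 8356560 (by decide) X (by linarith)
    · -- Y = 722
      exact no15 9 9934320 (by decide) X (by linarith)
    · -- Y = 782
      exact no15 7 11648880 (by decide) X (by linarith)
    · -- Y = 842
      exact no15 7 13500240 (by decide) X (by linarith)
    · -- Y = 902
      exact no15 9 15488400 (by decide) X (by linarith)
    · -- Y = 962
      exact no15 11 17613360 (by decide) X (by linarith)
    · -- Y = 1022
      exact no15 7 19875120 (by decide) X (by linarith)
    · -- Y = 1082
      exact no15 9 22273680 (by decide) X (by linarith)
    · -- Y = 1142
      exact no15 13 24809040 (by decide) X (by linarith)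
    · -- Y = 1202
      exact no15 7 27481200 (by decide) X (by linarith)
    · -- Y = 1262
      exact no15 7 30290160 (by decide) X (by linarith)
    · -- Y = 1322
      exact no15 13 33235920 (by decide) X (by linarith)
    · -- Y = 1382
      exact no15 13 36318480 (by decide) X (by linarith)
  · obtain ⟨k, hk⟩ : ∃ k, Y = 60 * k + 58 := ⟨(Y - 58) / 60, by omega⟩
    have hk2 : 0 ≤ k ∧ k ≤ 22 := by omega
    subst hk
    obtain ⟨hk0, hk23⟩ := hk2
    interval_cases k
    · -- Y = 58
      exact no15 7 93840 (by decide) X (by linarith)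
    · -- Y = 118
      exact no15 11 294480 (by decide) X (by linarith)
    · -- Y = 178
      exact no15 9 631920 (by decide) X (by linarith)
    · -- Y = 238
      exact no15 7 1106160 (by decide) X (by linarith)
    · -- Y = 298
      exact no15 13 1717200 (by decide) X (by linarith)
    · -- Y = 358
      exact no15 9 2465040 (by decide) X (by linarith)
    · -- Y = 418
      exact no15 7 3349680 (by decide) X (by linarith)
    · -- Y = 478
      exact no15 7 4371120 (by decide) X (by linarith)
    · -- Y = 538
      exact no15 9 5529360 (by decide) X (by linarith)
    · -- Y = 598
      exact no15 17 6824400 (by decide) X (by linarith)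
    · -- Y = 658
      exact no15 7 8256240 (by decide) X (by linarith)
    · -- Y = 718
      exact no15 9 9824880 (by decide) X (by linarith)
    · -- Y = 778
      exact no15 11 11530320 (by decide) X (by linarith)
    · -- Y = 838
      exact no15 7 13372560 (by decide) X (by linarith)
    · -- Y = 898
      exact no15 7 15351600 (by decide) X (by linarith)
    · -- Y = 958
      exact no15 13 17467440 (by decide) X (by linarith)
    · -- Y = 1018
      exact no15 11 19720080 (by decide) X (by linarith)
    · -- Y = 1078
      exact no15 7 22109520 (by decide) X (by linarith)
    · -- Y = 1138
      exact no15 11 24635760 (by decide) X (by linarith)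
    · -- Y = 1198
      exact no15 13 27298800 (by decide) X (by linarith)
    · -- Y = 1258
      exact no15 7 30098640 (by decide) X (by linarith)
    · -- Y = 1318
      exact no15 7 33035280 (by decide) X (by linarith)
    · -- Y = 1378
      exact no15 11 36108720 (by decide) X (by linarith)


lemma aux3 (X Y : ℤ) (h3 : X % 3 ≠ 0) : (2431 * X - 2736 * Y) % 3 ≠ 0 := by omega

lemma aux60 (X Y : ℤ) (h60 : Y % 60 = 2 ∨ Y % 60 = 58) :
    (2431 * Y - 2160 * X) % 60 = 2 ∨ (2431 * Y - 2160 * X) % 60 = 58 := by omega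

lemma auxabs3 (A : ℤ) (h : A % 3 ≠ 0) : |A| % 3 ≠ 0 := by
  rcases abs_choice A with h2 | h2 <;> rw [h2] <;> omega

lemma auxabs60 (B : ℤ) (h : B % 60 = 2 ∨ B % 60 = 58) :
    |B| % 60 = 2 ∨ |B| % 60 = 58 := by
  rcases abs_choice B with h2 | h2 <;> rw [h2] <;> omega

lemma auxtn (B Y : ℤ) (n : ℕ) (h : |B| < Y) (hn : Y.toNat ≤ n + 1) (h0 : 0 < |B|) :
    (|B|).toNat ≤ n := by omega

set_option maxHeartbeats 1600000 in
lemma key (n : ℕ) : ∀ X Y : ℤ, Y.toNat ≤ n → 0 < X → 0 < Y → X % 3 ≠ 0 →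
    (Y % 60 = 2 ∨ Y % 60 = 58) → 15 * X ^ 2 - 19 * Y ^ 2 ≠ 29924 := by
  induction n with
  | zero => intro X Y hn hX hY _ _ _; exact absurd hn (by omega)
  | succ n ih =>
    intro X Y hn hX hY h3 h60 heq
    by_cases hle : Y ≤ 1383
    · exact base X Y hX hY hle h3 h60 heq
    push_neg at hle
    obtain ⟨A, hA⟩ : ∃ A : ℤ, A = 2431 * X - 2736 * Y := ⟨_, rfl⟩
    obtain ⟨B, hB⟩ : ∃ B : ℤ, B = 2431 * Y - 2160 * X := ⟨_, rfl⟩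
    have heq' : 15 * A ^ 2 - 19 * B ^ 2 = 29924 := by
      rw [hA, hB]; linear_combination heq
    have h64 : (9 * Y) ^ 2 < (8 * X) ^ 2 := by nlinarith [sq_nonneg Y]
    have h8 : 9 * Y < 8 * X := by
      have h9 : (0 : ℤ) ≤ 9 * Y := by linarith
      exact lt_of_pow_lt_pow_left₀ 2 (by linarith) h64
    have hYsq : 1915456 ≤ Y ^ 2 := by nlinarith [sq_nonneg (Y - 1384)]
    have h152 : (135 * X) ^ 2 < (152 * Y) ^ 2 := by nlinarith
    have h135 : 135 * X < 152 * Y := by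
      exact lt_of_pow_lt_pow_left₀ 2 (by linarith) h152
    have hBlt : B < Y := by rw [hB]; linarith
    have hBgt : -Y < B := by rw [hB]; linarith
    have hB0 : B ≠ 0 := by
      intro h0
      rw [h0] at heq'
      have hA15 : 15 * A ^ 2 = 29924 := by linarith
      have hdvd : (15 : ℤ) ∣ 29924 := ⟨A ^ 2, by linarith⟩
      norm_num at hdvd
    have hA0 : A ≠ 0 := by
      intro h0
      rw [h0] at heq'
      nlinarith [sq_nonneg B]
    have hA3 : A % 3 ≠ 0 := by rw [hA]; exact aux3 X Y h3
    have hB60 : B % 60 = 2 ∨ B % 60 = 58 := by rw [hB]; exact aux60 X Y h60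
    have habsA : 0 < |A| := abs_pos.mpr hA0
    have habsB : 0 < |B| := abs_pos.mpr hB0
    have heq2 : 15 * |A| ^ 2 - 19 * |B| ^ 2 = 29924 := by
      rw [sq_abs, sq_abs]; exact heq'
    have hA3' : |A| % 3 ≠ 0 := auxabs3 A hA3
    have hB60' : |B| % 60 = 2 ∨ |B| % 60 = 58 := auxabs60 B hB60
    have hlt : |B| < Y := abs_lt.mpr ⟨hBgt, hBlt⟩
    have htn : (|B|).toNat ≤ n := auxtn B Y n hlt hn habsB
    exact ih |A| |B| htn habsA habsB hA3' hB60' heq2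

theorem no_solution_c_seventeen :
    ¬ ∃ X Y : ℤ, 0 < X ∧ 0 < Y ∧ X ≡ 4 [ZMOD 60] ∧ Y ≡ 58 [ZMOD 60] ∧
      19 * Y ^ 2 - 15 * X ^ 2 = -29924 := by
  rintro ⟨X, Y, hX, hY, hX60, hY60, heq⟩
  have hx : X % 60 = 4 % 60 := hX60
  have hy : Y % 60 = 58 % 60 := hY60
  have h3 : X % 3 ≠ 0 := by omega
  have h60 : Y % 60 = 2 ∨ Y % 60 = 58 := by omega
  exact key Y.toNat X Y le_rfl hX hY h3 h60 (by linarith)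
end

section
/- The only nonnegative integers α, β such that n = 2^α·5^β satisfies n·φ(n) ≡ 2 (mod σ(n)) are those giving n ∈ {1, 2, 5, 8}. -/
open Finset



-- geometric sums
lemma sumpow2 (m : ℕ) : (∑ i ∈ range m, 2^i) + 1 = 2^m := by
  induction m with
  | zero => simp
  | succ n ih => rw [sum_range_succ, pow_succ]; omega

lemma sumpow5 (m : ℕ) : 4 * (∑ i ∈ range m, 5^i) + 1 = 5^m := by
  induction m with
  | zero => simp
  | succ n ih => rw [sum_range_succ, pow_succ]; ring_nf; ring_nf at ih; omega

lemma sum5mod2 (m : ℕ) : (∑ i ∈ range m, 5^i) % 2 = m % 2 := by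
  induction m with
  | zero => simp
  | succ n ih =>
    rw [sum_range_succ]
    have h5 : 5^n % 2 = 1 := Nat.odd_iff.mp (Odd.pow ⟨2, rfl⟩)
    omega

-- sigma formula
lemma sigma_formula (α β : ℕ) :
    ArithmeticFunction.sigma 1 (2^α * 5^β) = (2^(α+1) - 1) * (∑ i ∈ range (β+1), 5^i) := by
  have hco : Nat.Coprime (2^α) (5^β) := Nat.Coprime.pow _ _ (by norm_num)
  rw [ArithmeticFunction.isMultiplicative_sigma.map_mul_of_coprime hco,
    ArithmeticFunction.sigma_one_apply_prime_pow Nat.prime_two,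
    ArithmeticFunction.sigma_one_apply_prime_pow (by norm_num : Nat.Prime 5)]
  have h2 := sumpow2 (α+1)
  congr 1
  omega


lemma p2mod96 : ∀ j : ℕ, (2:ℤ)^(2*j+5) % 96 = 32 := by
  intro j
  induction j with
  | zero => norm_num
  | succ n ih =>
    have h : (2:ℤ)^(2*(n+1)+5) = 4 * 2^(2*n+5) := by ring
    rw [h]; omega

lemma p5mod96 : ∀ j : ℕ, (5:ℤ)^(2*j+1) % 96 = 5 ∨ (5:ℤ)^(2*j+1) % 96 = 29 ∨
    (5:ℤ)^(2*j+1) % 96 = 53 ∨ (5:ℤ)^(2*j+1) % 96 = 77 := by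
  intro j
  induction j with
  | zero => norm_num
  | succ n ih =>
    have h : (5:ℤ)^(2*(n+1)+1) = 25 * 5^(2*n+1) := by ring
    rw [h]; omega

lemma p2mod5 : ∀ j : ℕ, (2:ℤ)^(2*j+1) % 5 = 2 ∨ (2:ℤ)^(2*j+1) % 5 = 3 := by
  intro j
  induction j with
  | zero => norm_num
  | succ n ih =>
    have h : (2:ℤ)^(2*(n+1)+1) = 4 * 2^(2*n+1) := by ring
    rw [h]; omega

lemma p2mod3even : ∀ j : ℕ, (2:ℤ)^(2*j) % 3 = 1 := by
  intro j
  induction j with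
  | zero => norm_num
  | succ n ih =>
    have h : (2:ℤ)^(2*(n+1)) = 4 * 2^(2*n) := by ring
    rw [h]; omega

lemma p5mod3even : ∀ j : ℕ, (5:ℤ)^(2*j) % 3 = 1 := by
  intro j
  induction j with
  | zero => norm_num
  | succ n ih =>
    have h : (5:ℤ)^(2*(n+1)) = 25 * 5^(2*n) := by ring
    rw [h]; omega

lemma p2mod3odd : ∀ j : ℕ, (2:ℤ)^(2*j+1) % 3 = 2 := by
  intro j
  have h : (2:ℤ)^(2*j+1) = 2 * 2^(2*j) := by ring
  have := p2mod3even j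
  rw [h]; omega

lemma p5mod3odd : ∀ j : ℕ, (5:ℤ)^(2*j+1) % 3 = 2 := by
  intro j
  have h : (5:ℤ)^(2*j+1) = 5 * 5^(2*j) := by ring
  have := p5mod3even j
  rw [h]; omega

lemma pow5pos (m : ℕ) : (1:ℤ) ≤ 5^m := one_le_pow₀ (by norm_num)
lemma pow2pos (m : ℕ) : (1:ℤ) ≤ 2^m := one_le_pow₀ (by norm_num)


def okPair (X Y : ℕ) : Bool :=
  let S := X^2+Y^2+2*X+2*Y
  !(decide (1 ≤ X) && decide (X ≤ Y) && decide (X*Y ∣ S - 499) && decide (499 + 11*(X*Y) ≤ S)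
     && (decide ((S-499)/(X*Y) % 30 = 11) || decide ((S-499)/(X*Y) % 30 = 17)))
  || (decide (X = 1 ∧ Y = 31) || decide (X = 1 ∧ Y = 496))

set_option maxRecDepth 100000 in
lemma baseChk : ((List.range 22).all fun X => (List.range 497).all fun Y => okPair X Y) = true := by
  decide

set_option maxRecDepth 100000 in
lemma baseProp (X Y : ℕ) (hX : X < 22) (hY : Y < 497) (h1 : 1 ≤ X) (h2 : X ≤ Y)
    (h3 : X*Y ∣ X^2+Y^2+2*X+2*Y - 499)
    (h4 : 499 + 11*(X*Y) ≤ X^2+Y^2+2*X+2*Y)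
    (h5 : (X^2+Y^2+2*X+2*Y - 499)/(X*Y) % 30 = 11 ∨ (X^2+Y^2+2*X+2*Y - 499)/(X*Y) % 30 = 17) :
    (X = 1 ∧ Y = 31) ∨ (X = 1 ∧ Y = 496) := by
  have h := baseChk
  rw [List.all_eq_true] at h
  have hx := h X (List.mem_range.mpr hX)
  rw [List.all_eq_true] at hx
  have hxy := hx Y (List.mem_range.mpr hY)
  simp only [okPair, Bool.or_eq_true, Bool.and_eq_true, Bool.not_eq_true',
    decide_eq_true_eq, Bool.and_eq_false_iff, decide_eq_false_iff_not,
    Bool.or_eq_false_iff] at hxy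
  tauto



set_option maxHeartbeats 1000000 in
lemma descent : ∀ N : ℕ, ∀ k x y : ℤ, 1 ≤ x → x ≤ y → x + y ≤ (N:ℤ) → 11 ≤ k →
    (k % 30 = 11 ∨ k % 30 = 17) → k*x*y = x^2+y^2+2*x+2*y-499 →
    (k = 17 ∧ ((x%96 = 1 ∧ y%96 = 31) ∨ (x%96 = 31 ∧ y%96 = 44) ∨ (x%96 = 44 ∧ y%96 = 43) ∨
               (x%96 = 43 ∧ y%96 = 13) ∨ (x%96 = 13 ∧ y%96 = 80) ∨ (x%96 = 80 ∧ y%96 = 1)))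
  ∨ (k = 497 ∧ ((x%96 = 1 ∧ y%96 = 16) ∨ (x%96 = 16 ∧ y%96 = 77) ∨ (x%96 = 77 ∧ y%96 = 43) ∨
               (x%96 = 43 ∧ y%96 = 76) ∨ (x%96 = 76 ∧ y%96 = 95) ∨ (x%96 = 95 ∧ y%96 = 1))) := by
  intro N
  induction N with
  | zero => intro k x y h1 h2 h3; omega
  | succ N ih =>
    intro k x y hx1 hxy hsum hk11 hk30 E
    by_cases hN : x + y ≤ (N:ℤ)
    · exact ih k x y hx1 hxy hN hk11 hk30 E
    by_cases hx21 : x ≤ 21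
    · -- base case
      have hdvd : y ∣ x^2+2*x-499 := ⟨k*x - y - 2, by linear_combination -E⟩
      have hdvd' : y ∣ 499 - 2*x - x^2 := by
        have h := dvd_neg.mpr hdvd
        have e : -(x^2+2*x-499) = 499 - 2*x - x^2 := by ring
        rwa [e] at h
      have hyb : y ≤ 499 - 2*x - x^2 := Int.le_of_dvd (by nlinarith) hdvd'
      have hy496 : y ≤ 496 := by nlinarith
      obtain ⟨X, hX⟩ : ∃ X : ℕ, (X:ℤ) = x := ⟨x.toNat, Int.toNat_of_nonneg (by omega)⟩
      obtain ⟨Y, hY⟩ : ∃ Y : ℕ, (Y:ℤ) = y := ⟨y.toNat, Int.toNat_of_nonneg (by omega)⟩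
      obtain ⟨K, hK⟩ : ∃ K : ℕ, (K:ℤ) = k := ⟨k.toNat, Int.toNat_of_nonneg (by omega)⟩
      have hS : K*X*Y + 499 = X^2+Y^2+2*X+2*Y := by
        have h : ((K*X*Y + 499 : ℕ) : ℤ) = ((X^2+Y^2+2*X+2*Y : ℕ) : ℤ) := by
          push_cast [hX, hY, hK]
          linarith [E]
        exact_mod_cast h
      have hXYpos : 0 < X*Y := by
        have u1 : 1 ≤ X := by omega
        have u2 : 1 ≤ Y := by omega
        exact Nat.mul_pos u1 u2
      have hm : K*X*Y = X*Y*K := by ring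
      have hwit : X^2+Y^2+2*X+2*Y - 499 = X*Y*K := by omega
      have hdn : X*Y ∣ X^2+Y^2+2*X+2*Y - 499 := ⟨K, hwit⟩
      have hq : (X^2+Y^2+2*X+2*Y - 499)/(X*Y) = K := by
        rw [hwit]; exact Nat.mul_div_cancel_left _ hXYpos
      have h4 : 499 + 11*(X*Y) ≤ X^2+Y^2+2*X+2*Y := by
        have h11 : 11 ≤ K := by omega
        have h12 := Nat.mul_le_mul_right (X*Y) h11
        have hm2 : K*(X*Y) = X*Y*K := by ring
        omega
      have hK30 : K % 30 = 11 ∨ K % 30 = 17 := by omega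
      have hbase := baseProp X Y (by omega) (by omega) (by omega) (by omega) hdn h4 (by rw [hq]; exact hK30)
      rcases hbase with ⟨rfl, rfl⟩ | ⟨rfl, rfl⟩
      · left
        constructor
        · -- k = 17
          norm_num at hS
          omega
        · left; omega
      · right
        constructor
        · norm_num at hS
          omega
        · left; omega
    · -- descent step
      push_neg at hx21
      have hy2 : x + 2 ≤ y := by
        rcases (by omega : y = x ∨ y = x + 1 ∨ x + 2 ≤ y) with rfl | rfl | h
        · nlinarith
        · nlinarith
        · exact h
      have hty : (k*x - y - 2)*y = x^2+2*x-499 := by linear_combination E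
      have hpos : 0 < x^2+2*x-499 := by nlinarith
      have ht1 : 1 ≤ k*x - y - 2 := by nlinarith
      have htx : k*x - y - 2 < x := by nlinarith
      have E' : k*(k*x - y - 2)*x = (k*x - y - 2)^2+x^2+2*(k*x - y - 2)+2*x-499 := by
        linear_combination E
      have hres := ih k (k*x - y - 2) x ht1 (by omega) (by omega) hk11 hk30 E'
      clear E E' hty hpos ht1 htx hsum hN ih hk11 hk30 hxy hx1 hx21
      obtain ⟨hk17, hp⟩ | ⟨hk497, hp⟩ := hres
      · subst hk17
        left
        refine ⟨rfl, ?_⟩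
        rcases hp with ⟨h1,h2⟩|⟨h1,h2⟩|⟨h1,h2⟩|⟨h1,h2⟩|⟨h1,h2⟩|⟨h1,h2⟩
        · exact Or.inr (Or.inl ⟨h2, by omega⟩)
        · exact Or.inr (Or.inr (Or.inl ⟨h2, by omega⟩))
        · exact Or.inr (Or.inr (Or.inr (Or.inl ⟨h2, by omega⟩)))
        · exact Or.inr (Or.inr (Or.inr (Or.inr (Or.inl ⟨h2, by omega⟩))))
        · exact Or.inr (Or.inr (Or.inr (Or.inr (Or.inr ⟨h2, by omega⟩))))
        · exact Or.inl ⟨h2, by omega⟩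
      · subst hk497
        right
        refine ⟨rfl, ?_⟩
        rcases hp with ⟨h1,h2⟩|⟨h1,h2⟩|⟨h1,h2⟩|⟨h1,h2⟩|⟨h1,h2⟩|⟨h1,h2⟩
        · exact Or.inr (Or.inl ⟨h2, by omega⟩)
        · exact Or.inr (Or.inr (Or.inl ⟨h2, by omega⟩))
        · exact Or.inr (Or.inr (Or.inr (Or.inl ⟨h2, by omega⟩)))
        · exact Or.inr (Or.inr (Or.inr (Or.inr (Or.inl ⟨h2, by omega⟩))))
        · exact Or.inr (Or.inr (Or.inr (Or.inr (Or.inr ⟨h2, by omega⟩))))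
        · exact Or.inl ⟨h2, by omega⟩



lemma mainNoSol (k u v : ℤ) (hu96 : u % 96 = 31)
    (hv96 : v % 96 = 4 ∨ v % 96 = 28 ∨ v % 96 = 52 ∨ v % 96 = 76)
    (hu5 : u % 5 = 1 ∨ u % 5 = 2) (hv5 : v % 5 = 4)
    (hul : 31 ≤ u) (hvl : 124 ≤ v)
    (E : k*u*v = u^2+v^2+2*u+2*v-499) : False := by
  have hk1 : 1 ≤ k := by
    rcases le_or_gt 1 k with h | h
    · exact h
    · exfalso
      have huv : 0 < u * v := mul_pos (by omega) (by omega)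
      have hle : k * (u*v) ≤ 0 := mul_nonpos_iff.mpr (Or.inr ⟨by omega, by omega⟩)
      have hE' : k*(u*v) = u^2+v^2+2*u+2*v-499 := by linear_combination E
      nlinarith [sq_nonneg (u-31), sq_nonneg (v-124)]
  -- k odd (mod 8)
  have hu8 : u ≡ 7 [ZMOD 8] := by unfold Int.ModEq; omega
  have hv8 : v ≡ 4 [ZMOD 8] := by unfold Int.ModEq; omega
  have hL8 : k*u*v ≡ k*7*4 [ZMOD 8] := ((Int.ModEq.refl k).mul hu8).mul hv8
  have hR8 : u^2+v^2+2*u+2*v-499 ≡ 7^2+4^2+2*7+2*4-499 [ZMOD 8] :=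
    ((((hu8.pow 2).add (hv8.pow 2)).add ((Int.ModEq.refl 2).mul hu8)).add
      ((Int.ModEq.refl 2).mul hv8)).sub (Int.ModEq.refl 499)
  have h8 : k*7*4 ≡ 7^2+4^2+2*7+2*4-499 [ZMOD 8] := (hL8.symm.trans (E ▸ Int.ModEq.refl _)).trans hR8
  have hk2 : k % 2 = 1 := by
    have := Int.ModEq.dvd h8
    omega
  -- k mod 3
  have hu3 : u ≡ 1 [ZMOD 3] := by unfold Int.ModEq; omega
  have hv3 : v ≡ 1 [ZMOD 3] := by unfold Int.ModEq; omega
  have hL3 : k*u*v ≡ k*1*1 [ZMOD 3] := ((Int.ModEq.refl k).mul hu3).mul hv3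
  have hR3 : u^2+v^2+2*u+2*v-499 ≡ 1^2+1^2+2*1+2*1-499 [ZMOD 3] :=
    ((((hu3.pow 2).add (hv3.pow 2)).add ((Int.ModEq.refl 2).mul hu3)).add
      ((Int.ModEq.refl 2).mul hv3)).sub (Int.ModEq.refl 499)
  have h3 : k*1*1 ≡ 1^2+1^2+2*1+2*1-499 [ZMOD 3] := (hL3.symm.trans (E ▸ Int.ModEq.refl _)).trans hR3
  have hk3 : k % 3 = 2 := by
    have := Int.ModEq.dvd h3
    omega
  -- k mod 5
  have hv5' : v ≡ 4 [ZMOD 5] := by unfold Int.ModEq; omega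
  have hk5 : k % 5 = 2 ∨ k % 5 = 1 := by
    rcases hu5 with hu5 | hu5
    · have hu5' : u ≡ 1 [ZMOD 5] := by unfold Int.ModEq; omega
      have hL : k*u*v ≡ k*1*4 [ZMOD 5] := ((Int.ModEq.refl k).mul hu5').mul hv5'
      have hR : u^2+v^2+2*u+2*v-499 ≡ 1^2+4^2+2*1+2*4-499 [ZMOD 5] :=
        ((((hu5'.pow 2).add (hv5'.pow 2)).add ((Int.ModEq.refl 2).mul hu5')).add
          ((Int.ModEq.refl 2).mul hv5')).sub (Int.ModEq.refl 499)
      have h5 : k*1*4 ≡ 1^2+4^2+2*1+2*4-499 [ZMOD 5] := (hL.symm.trans (E ▸ Int.ModEq.refl _)).trans hR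
      have := Int.ModEq.dvd h5
      omega
    · have hu5' : u ≡ 2 [ZMOD 5] := by unfold Int.ModEq; omega
      have hL : k*u*v ≡ k*2*4 [ZMOD 5] := ((Int.ModEq.refl k).mul hu5').mul hv5'
      have hR : u^2+v^2+2*u+2*v-499 ≡ 2^2+4^2+2*2+2*4-499 [ZMOD 5] :=
        ((((hu5'.pow 2).add (hv5'.pow 2)).add ((Int.ModEq.refl 2).mul hu5')).add
          ((Int.ModEq.refl 2).mul hv5')).sub (Int.ModEq.refl 499)
      have h5 : k*2*4 ≡ 2^2+4^2+2*2+2*4-499 [ZMOD 5] := (hL.symm.trans (E ▸ Int.ModEq.refl _)).trans hR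
      have := Int.ModEq.dvd h5
      omega
  have hk30 : (k % 30 = 11 ∨ k % 30 = 17) ∧ 11 ≤ k := by omega
  -- apply descent
  rcases le_total u v with huv | huv
  · have hres := descent (u+v).toNat k u v (by omega) huv (by omega) hk30.2 hk30.1 E
    rcases hres with ⟨_, hp⟩ | ⟨_, hp⟩ <;> omega
  · have E' : k*v*u = v^2+u^2+2*v+2*u-499 := by linear_combination E
    have hres := descent (u+v).toNat k v u (by omega) huv (by omega) hk30.2 hk30.1 E'
    rcases hres with ⟨_, hp⟩ | ⟨_, hp⟩ <;> omega



lemma p25mod4 : ∀ m : ℕ, (25:ℤ)^m % 4 = 1 := by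
  intro m
  induction m with
  | zero => norm_num
  | succ n ih => rw [pow_succ]; omega

lemma oddFactor4 (m c : ℤ) (hm : m % 2 = 1) (h : 4 ∣ m * c) : ∃ c', c = 4 * c' := by
  have h2 : ((2:ℕ):ℤ) ∣ m * c := by
    push_cast
    exact dvd_trans (by norm_num) h
  have hc2 : (2:ℤ) ∣ c := by
    rcases Int.Prime.dvd_mul' Nat.prime_two h2 with h' | h'
    · exfalso; push_cast at h'; omega
    · exact_mod_cast h'
  obtain ⟨c1, rfl⟩ := hc2
  have h4 : ((2:ℕ):ℤ) ∣ m * c1 := by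
    obtain ⟨e, he⟩ := h
    push_cast
    exact ⟨e, by linarith⟩
  have hc1 : (2:ℤ) ∣ c1 := by
    rcases Int.Prime.dvd_mul' Nat.prime_two h4 with h' | h'
    · exfalso; push_cast at h'; omega
    · exact_mod_cast h'
  obtain ⟨c2, rfl⟩ := hc1
  exact ⟨c2, by ring⟩

lemma hardCase (g d : ℕ) :
    ¬ ((2^(2*g+4) * 5^(2*d+2)) * Nat.totient (2^(2*g+4) * 5^(2*d+2)) ≡ 2
      [MOD ArithmeticFunction.sigma 1 (2^(2*g+4) * 5^(2*d+2))]) := by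
  intro H
  have hco : Nat.Coprime (2^(2*g+4)) (5^(2*d+2)) := Nat.Coprime.pow _ _ (by norm_num)
  have e1 : 2*g+4-1 = 2*g+3 := by omega
  have e2 : 2*d+2-1 = 2*d+1 := by omega
  have hφ : Nat.totient (2^(2*g+4) * 5^(2*d+2)) = 2^(2*g+3) * (5^(2*d+1) * 4) := by
    rw [Nat.totient_mul hco, Nat.totient_prime_pow Nat.prime_two (by omega),
        Nat.totient_prime_pow (by norm_num : Nat.Prime 5) (by omega), e1, e2]
    norm_num
  have hσ := sigma_formula (2*g+4) (2*d+2)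
  have hB : 2*d+2+1 = 2*d+3 := by omega
  rw [hB] at hσ
  set W : ℕ := ∑ i ∈ range (2*d+3), 5^i with hWdef
  have hW5 : 4*W + 1 = 5^(2*d+3) := sumpow5 _
  have hW2 : W % 2 = 1 := by rw [hWdef, sum5mod2]; omega
  have hA : 2*g+4+1 = 2*g+5 := by omega
  rw [hA] at hσ
  -- to ℤ
  have hdvd := (Nat.modEq_iff_dvd).mp H
  rw [hφ, hσ] at hdvd
  have h2pos : 1 ≤ 2^(2*g+5) := Nat.one_le_two_pow
  have hcast : (((2^(2*g+5) - 1) * W : ℕ) : ℤ) = ((2:ℤ)^(2*g+5) - 1) * (W:ℤ) := by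
    push_cast [Nat.cast_sub h2pos]
    ring
  rw [hcast] at hdvd
  push_cast at hdvd
  set u : ℤ := (2:ℤ)^(2*g+5) - 1 with hu
  set Wz : ℤ := (W:ℤ) with hWz
  -- master divisibility
  obtain ⟨c0, hc0⟩ := hdvd
  have H2 : u * Wz ∣ ((2:ℤ)^(2*g+5))^2 * ((5:ℤ)^(2*d+3))^2 - 500 :=
    ⟨(-250) * c0, by linear_combination (-250) * hc0⟩
  have hbz : (4*Wz + 1) = (5:ℤ)^(2*d+3) := by
    rw [hWz]
    exact_mod_cast congrArg (Nat.cast : ℕ → ℤ) hW5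
  have haz : (u + 1) = (2:ℤ)^(2*g+5) := by rw [hu]; ring
  have H2' : u * Wz ∣ (u+1)^2 * (4*Wz+1)^2 - 500 := by rw [haz, hbz]; exact H2
  have H3 : u * Wz ∣ (u+1)^2 + (4*Wz+1)^2 - 501 := by
    obtain ⟨c, hc⟩ := H2'
    exact ⟨c - 4*((u+1)*(4*Wz+1) + (u+1) + (4*Wz+1) - 1) - 8, by linear_combination hc⟩
  -- 4 divides
  have h4a : (4:ℤ) ∣ (u+1)^2 := by
    rw [haz]
    exact ⟨2^(4*g+8), by ring⟩
  have h4b : ((4*Wz+1))^2 % 4 = 1 := by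
    rw [hbz]
    have h25 : ((5:ℤ)^(2*d+3))^2 = 25^(2*d+3) := by
      rw [← pow_mul, mul_comm (2*d+3) 2, pow_mul]
      norm_num
    rw [h25]
    exact p25mod4 _
  have h4 : (4:ℤ) ∣ (u+1)^2 + (4*Wz+1)^2 - 501 := by omega
  -- extract k
  obtain ⟨c, hc⟩ := H3
  have hu2 : u % 2 = 1 := by
    have : (2:ℤ) ∣ 2^(2*g+5) := ⟨2^(2*g+4), by ring⟩
    omega
  have hWz2 : Wz % 2 = 1 := by omega
  have hm2 : (u * Wz) % 2 = 1 := by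
    rw [Int.mul_emod, hu2, hWz2]
    norm_num
  have h4c : (4:ℤ) ∣ (u*Wz) * c := by rw [← hc]; exact h4
  obtain ⟨k, rfl⟩ := oddFactor4 (u*Wz) c hm2 h4c
  set v : ℤ := 4 * Wz with hv
  have E : k*u*v = u^2+v^2+2*u+2*v-499 := by
    linear_combination (-1) * hc + k*u*hv
  -- residues and sizes
  have hp2 := p2mod96 g
  have hu96 : u % 96 = 31 := by omega
  have hp5 := p5mod96 (d+1)
  have e3 : 2*(d+1)+1 = 2*d+3 := by omega
  rw [e3] at hp5
  have hv96 : v % 96 = 4 ∨ v % 96 = 28 ∨ v % 96 = 52 ∨ v % 96 = 76 := by omega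
  have hp25 := p2mod5 (g+2)
  have e4 : 2*(g+2)+1 = 2*g+5 := by omega
  rw [e4] at hp25
  have hu5 : u % 5 = 1 ∨ u % 5 = 2 := by omega
  have h5d : (5:ℤ) ∣ 5^(2*d+3) := ⟨5^(2*d+2), by ring⟩
  have hv5 : v % 5 = 4 := by omega
  have hul : 31 ≤ u := by
    have h32 : (2:ℤ)^(2*g+5) = 32 * 2^(2*g) := by ring
    have hp : (1:ℤ) ≤ 2^(2*g) := one_le_pow₀ (by norm_num)
    omega
  have hvl : 124 ≤ v := by
    have h125 : (5:ℤ)^(2*d+3) = 125 * 5^(2*d) := by ring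
    have hp : (1:ℤ) ≤ 5^(2*d) := one_le_pow₀ (by norm_num)
    omega
  exact mainNoSol k u v hu96 hv96 hu5 hv5 hul hvl E



-- helper to get integer divisibility from the hypothesis
lemma toDvd {n σ φt : ℕ} (h : n * φt ≡ 2 [MOD σ]) : (σ:ℤ) ∣ 2 - (n*φt : ℕ) :=
  (Nat.modEq_iff_dvd).mp h

lemma totient_form (α β : ℕ) : Nat.totient (2^(α+1) * 5^(β+1)) = 2^α * (5^β * 4) := by
  have hco : Nat.Coprime (2^(α+1)) (5^(β+1)) := Nat.Coprime.pow _ _ (by norm_num)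
  rw [Nat.totient_mul hco, Nat.totient_prime_pow Nat.prime_two (by omega),
      Nat.totient_prime_pow (by norm_num : Nat.Prime 5) (by omega)]
  simp

-- case: alpha, beta >= 1 and one of them odd : mod 3
lemma mod3Case (a b : ℕ) (hodd : (a+1) % 2 = 1 ∨ (b+1) % 2 = 1) :
    ¬ ((2^(a+1) * 5^(b+1)) * Nat.totient (2^(a+1) * 5^(b+1)) ≡ 2
      [MOD ArithmeticFunction.sigma 1 (2^(a+1) * 5^(b+1))]) := by
  intro H
  rw [totient_form] at H
  have hdvd := toDvd H
  rw [sigma_formula] at hdvd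
  have h2pos : 1 ≤ 2^(a+1+1) := Nat.one_le_two_pow
  set W : ℕ := ∑ i ∈ range (b+1+1), 5^i with hWdef
  have hW5 : 4*W + 1 = 5^(b+2) := by
    have := sumpow5 (b+1+1)
    convert this using 2
  have e12 : a+1+1 = a+2 := by omega
  rw [e12] at hdvd
  have hcast : (((2^(a+2) - 1) * W : ℕ) : ℤ) = ((2:ℤ)^(a+2) - 1) * (W:ℤ) := by
    push_cast [Nat.cast_sub (show 1 ≤ 2^(a+2) from Nat.one_le_two_pow)]
    ring
  rw [hcast] at hdvd
  push_cast at hdvd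
  -- n * φ = 2^(2a+3) * 5^(2b+3)
  have hnφ : ((2:ℤ)^(a+1) * 5^(b+1) * (2^a * (5^b*4))) = 2^(2*a+3) * 5^(2*b+1) := by ring
  rw [hnφ] at hdvd
  -- 3 divides sigma
  have h3 : (3:ℤ) ∣ ((2:ℤ)^(a+2) - 1) * (W:ℤ) := by
    rcases hodd with ho | ho
    · -- a+1 odd, so a+2 even
      obtain ⟨j, hj⟩ : ∃ j, a+2 = 2*j := ⟨(a+2)/2, by omega⟩
      have := p2mod3even j
      rw [hj]
      exact Dvd.dvd.mul_right (by omega) _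
    · -- b+1 odd, so b+2 even
      obtain ⟨j, hj⟩ : ∃ j, b+2 = 2*j := ⟨(b+2)/2, by omega⟩
      have h51 := p5mod3even j
      have hWz : 4*(W:ℤ) + 1 = 5^(b+2) := by exact_mod_cast hW5
      rw [hj] at hWz
      have h3W : (3:ℤ) ∣ (W:ℤ) := by omega
      exact Dvd.dvd.mul_left h3W _
  have hdd : (3:ℤ) ∣ 2 - 2^(2*a+3) * 5^(2*b+1) := dvd_trans h3 hdvd
  -- but 2^(2a+3)*5^(2b+3) ≡ 1 mod 3
  obtain ⟨j1, hj1⟩ : ∃ j, 2*a+3 = 2*j+1 := ⟨a+1, by omega⟩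
  obtain ⟨j2, hj2⟩ : ∃ j, 2*b+1 = 2*j+1 := ⟨b, by omega⟩
  have e2 := p2mod3odd j1
  have e5' := p5mod3odd j2
  rw [hj1, hj2] at hdd
  have hmul : ((2:ℤ)^(2*j1+1) * 5^(2*j2+1)) % 3 = 1 := by
    rw [Int.mul_emod, e2, e5']
    norm_num
  omega



-- case beta = 0, alpha = m+4
lemma beta0Case (m : ℕ) :
    ¬ ((2^(m+4) * 5^0) * Nat.totient (2^(m+4) * 5^0) ≡ 2
      [MOD ArithmeticFunction.sigma 1 (2^(m+4) * 5^0)]) := by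
  intro H
  have hφ : Nat.totient (2^(m+4) * 5^0) = 2^(m+3) := by
    norm_num
    rw [Nat.totient_prime_pow Nat.prime_two (by omega)]
    have : m+4-1 = m+3 := by omega
    rw [this]
    norm_num
  rw [hφ] at H
  have hdvd := (Nat.modEq_iff_dvd).mp H
  rw [sigma_formula] at hdvd
  have hcast : (((2^(m+4+1) - 1) * ∑ i ∈ range (0+1), 5^i : ℕ) : ℤ)
      = ((2:ℤ)^(m+5) - 1) := by
    have e : m+4+1 = m+5 := by omega
    rw [e]
    push_cast [Nat.cast_sub (show 1 ≤ 2^(m+5) from Nat.one_le_two_pow)]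
    simp
  rw [hcast] at hdvd
  push_cast at hdvd
  obtain ⟨c0, hc0⟩ := hdvd
  have hD : ((2:ℤ)^(m+5) - 1) ∣ 2^(m+2) - 2 :=
    ⟨-c0 - 2^(m+2), by linear_combination -hc0⟩
  have h2m : (1:ℤ) ≤ 2^m := one_le_pow₀ (by norm_num)
  have e1 : (2:ℤ)^(m+2) = 4 * 2^m := by ring
  have e2 : (2:ℤ)^(m+5) = 32 * 2^m := by ring
  have hle := Int.le_of_dvd (by omega) hD
  omega

-- case alpha = 0, beta = m+2
lemma alpha0Case (m : ℕ) :
    ¬ ((2^0 * 5^(m+2)) * Nat.totient (2^0 * 5^(m+2)) ≡ 2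
      [MOD ArithmeticFunction.sigma 1 (2^0 * 5^(m+2))]) := by
  intro H
  have hφ : Nat.totient (2^0 * 5^(m+2)) = 5^(m+1) * 4 := by
    norm_num
    rw [Nat.totient_prime_pow (by norm_num : Nat.Prime 5) (by omega)]
    have : m+2-1 = m+1 := by omega
    rw [this]
  rw [hφ] at H
  have hdvd := (Nat.modEq_iff_dvd).mp H
  rw [sigma_formula] at hdvd
  set W : ℕ := ∑ i ∈ range (m+2+1), 5^i with hWdef
  have hW5 : 4*W + 1 = 5^(m+3) := by
    have := sumpow5 (m+2+1)
    have e : m+2+1 = m+3 := by omega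
    rwa [e] at this
  have hcast : (((2^(0+1) - 1) * W : ℕ) : ℤ) = (W:ℤ) := by push_cast; ring
  rw [hcast] at hdvd
  push_cast at hdvd
  have hWz : 4*(W:ℤ) + 1 = 5^(m+3) := by exact_mod_cast hW5
  obtain ⟨c0, hc0⟩ := hdvd
  have hD : (W:ℤ) ∣ 4*5^m - 2 :=
    ⟨-c0 - 16*5^m, by linear_combination (-1)*hc0 + 4*5^m*hWz⟩
  have h5m : (1:ℤ) ≤ 5^m := one_le_pow₀ (by norm_num)
  have e1 : (5:ℤ)^(m+3) = 125 * 5^m := by ring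
  have hle := Int.le_of_dvd (by omega) hD
  omega

-- case alpha = 2, beta = 2d+2
lemma alpha2Case (d : ℕ) :
    ¬ ((2^2 * 5^(2*d+2)) * Nat.totient (2^2 * 5^(2*d+2)) ≡ 2
      [MOD ArithmeticFunction.sigma 1 (2^2 * 5^(2*d+2))]) := by
  intro H
  have hφ := totient_form 1 (2*d+1)
  have e : (2:ℕ)*d+1+1 = 2*d+2 := by omega
  rw [e] at hφ
  rw [show (2:ℕ)^2 = 2^(1+1) from rfl] at H
  rw [hφ] at H
  have hdvd := (Nat.modEq_iff_dvd).mp H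
  rw [sigma_formula] at hdvd
  set W : ℕ := ∑ i ∈ range (2*d+2+1), 5^i with hWdef
  have hW5 : 4*W + 1 = 5^(2*d+3) := by
    have := sumpow5 (2*d+2+1)
    have e : 2*d+2+1 = 2*d+3 := by omega
    rwa [e] at this
  have hW2 : W % 2 = 1 := by rw [hWdef, sum5mod2]; omega
  have h2pos : 1 ≤ 2^(1+1+1) := Nat.one_le_two_pow
  have hcast : (((2^(1+1+1) - 1) * W : ℕ) : ℤ) = 7 * (W:ℤ) := by
    push_cast [Nat.cast_sub h2pos]
    norm_num
  rw [hcast] at hdvd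
  push_cast at hdvd
  have hWz : 4*(W:ℤ) + 1 = 5^(2*d+3) := by exact_mod_cast hW5
  have hdvdW := dvd_trans (dvd_mul_left ((W:ℤ)) 7) hdvd
  obtain ⟨c0, hc0⟩ := hdvdW
  have hD2 : 32*5^(2*d) - 2 = (W:ℤ) * (-c0 - 128*5^(2*d)) := by
    linear_combination (-1)*hc0 + 32*5^(2*d)*hWz
  -- extract factor 2
  have hWodd : ((W:ℤ)) % 2 = 1 := by omega
  have heven : (2:ℤ) ∣ (W:ℤ) * (-c0 - 128*5^(2*d)) := ⟨16*5^(2*d) - 1, by linarith [hD2]⟩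
  have hc2 : (2:ℤ) ∣ (-c0 - 128*5^(2*d)) := by
    rcases Int.Prime.dvd_mul' Nat.prime_two (by exact_mod_cast heven) with h' | h'
    · exfalso; push_cast at h'; omega
    · exact_mod_cast h'
  obtain ⟨c1, hc1⟩ := hc2
  have hD3 : (2:ℤ) * (16*5^(2*d) - 1) = 2 * ((W:ℤ) * c1) := by
    rw [hc1] at hD2
    linarith [hD2]
  have hD4 : (16:ℤ)*5^(2*d) - 1 = (W:ℤ) * c1 := by
    have := mul_left_cancel₀ (two_ne_zero) hD3
    exact this
  have h5d : (1:ℤ) ≤ 5^(2*d) := one_le_pow₀ (by norm_num)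
  have e125 : (5:ℤ)^(2*d+3) = 125 * 5^(2*d) := by ring
  have hle := Int.le_of_dvd (by omega) ⟨c1, hD4⟩
  omega



lemma memElim (α β : ℕ) (h : 2^α*5^β ∈ ({1,2,5,8} : Set ℕ)) :
    (α = 0 ∧ β = 0) ∨ (α = 1 ∧ β = 0) ∨ (α = 0 ∧ β = 1) ∨ (α = 3 ∧ β = 0) := by
  have hinj2 := Nat.pow_right_injective (le_refl 2)
  have hinj5 := Nat.pow_right_injective (show 2 ≤ 5 by norm_num)
  simp only [Set.mem_insert_iff, Set.mem_singleton_iff] at h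
  have h2 : ∀ N : ℕ, 2^α*5^β = N → ¬ (5 ∣ N) → β = 0 := by
    intro N hN h5
    by_contra hβ
    exact h5 (hN ▸ Dvd.dvd.mul_left (dvd_pow_self 5 hβ) (2^α))
  have h2' : ∀ N : ℕ, 2^α*5^β = N → ¬ (2 ∣ N) → α = 0 := by
    intro N hN hd
    by_contra hα
    exact hd (hN ▸ Dvd.dvd.mul_right (dvd_pow_self 2 hα) (5^β))
  rcases h with h | h | h | h
  · -- = 1
    have hα : α = 0 := h2' 1 h (by norm_num)
    have hβ : β = 0 := h2 1 h (by norm_num)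
    exact Or.inl ⟨hα, hβ⟩
  · have hβ : β = 0 := h2 2 h (by norm_num)
    subst hβ
    simp at h
    exact Or.inr (Or.inl ⟨hinj2 (show 2^α = 2^1 by simpa using h), rfl⟩)
  · have hα : α = 0 := h2' 5 h (by norm_num)
    subst hα
    simp at h
    exact Or.inr (Or.inr (Or.inl ⟨rfl, hinj5 (show 5^β = 5^1 by simpa using h)⟩))
  · have hβ : β = 0 := h2 8 h (by norm_num)
    subst hβ
    simp at h
    exact Or.inr (Or.inr (Or.inr ⟨hinj2 (show 2^α = 2^3 by simpa using h), rfl⟩))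

-- positive cases
lemma pos1 : (2^0 * 5^0) * Nat.totient (2^0 * 5^0) ≡ 2
    [MOD ArithmeticFunction.sigma 1 (2^0 * 5^0)] := by
  rw [sigma_formula]
  decide

lemma pos2 : (2^1 * 5^0) * Nat.totient (2^1 * 5^0) ≡ 2
    [MOD ArithmeticFunction.sigma 1 (2^1 * 5^0)] := by
  rw [sigma_formula]
  decide

lemma pos5 : (2^0 * 5^1) * Nat.totient (2^0 * 5^1) ≡ 2
    [MOD ArithmeticFunction.sigma 1 (2^0 * 5^1)] := by
  rw [sigma_formula]
  decide

lemma pos8 : (2^3 * 5^0) * Nat.totient (2^3 * 5^0) ≡ 2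
    [MOD ArithmeticFunction.sigma 1 (2^3 * 5^0)] := by
  rw [sigma_formula]
  decide

lemma neg4 : ¬ ((2^2 * 5^0) * Nat.totient (2^2 * 5^0) ≡ 2
    [MOD ArithmeticFunction.sigma 1 (2^2 * 5^0)]) := by
  rw [sigma_formula]
  decide


theorem main_theorem (α β : ℕ) :
    (2 ^ α * 5 ^ β) * Nat.totient (2 ^ α * 5 ^ β) ≡ 2
      [MOD ArithmeticFunction.sigma 1 (2 ^ α * 5 ^ β)] ↔
    2 ^ α * 5 ^ β ∈ ({1, 2, 5, 8} : Set ℕ) := by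
  constructor
  · intro h
    rcases Nat.eq_zero_or_pos β with hβ | hβ
    · subst hβ
      rcases (show α = 0 ∨ α = 1 ∨ α = 2 ∨ α = 3 ∨ 4 ≤ α by omega) with rfl|rfl|rfl|rfl|hα
      · norm_num
      · norm_num
      · exact absurd h neg4
      · norm_num
      · obtain ⟨m, rfl⟩ : ∃ m, α = m + 4 := ⟨α - 4, by omega⟩
        exact absurd h (beta0Case m)
    · rcases Nat.eq_zero_or_pos α with hα | hα
      · subst hα
        rcases (show β = 1 ∨ 2 ≤ β by omega) with rfl|hβ2
        · norm_num
        · obtain ⟨m, rfl⟩ : ∃ m, β = m+2 := ⟨β-2, by omega⟩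
          exact absurd h (alpha0Case m)
      · exfalso
        obtain ⟨a', rfl⟩ : ∃ a', α = a'+1 := ⟨α-1, by omega⟩
        obtain ⟨b', rfl⟩ : ∃ b', β = b'+1 := ⟨β-1, by omega⟩
        by_cases hpar : (a'+1) % 2 = 1 ∨ (b'+1) % 2 = 1
        · exact mod3Case a' b' hpar h
        · push_neg at hpar
          obtain ⟨d, hd⟩ : ∃ d, b'+1 = 2*d+2 := ⟨(b'-1)/2, by omega⟩
          rcases (show a'+1 = 2 ∨ 4 ≤ a'+1 by omega) with h2 | h4
          · rw [h2, hd] at h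
            exact alpha2Case d h
          · obtain ⟨g, hg⟩ : ∃ g, a'+1 = 2*g+4 := ⟨(a'-3)/2, by omega⟩
            rw [hg, hd] at h
            exact hardCase g d h
  · intro h
    rcases memElim α β h with ⟨rfl,rfl⟩|⟨rfl,rfl⟩|⟨rfl,rfl⟩|⟨rfl,rfl⟩
    exacts [pos1, pos2, pos5, pos8]
end
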